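/- Let B ∈ L⊗ℚ and φ := exp(B)σ. Then the map η : γ ↦ (0, γ, (γ,B)) sends T(X,α_B) into Λ̃ (since (γ,B) ∈ ℤ on T(X,α_B)), is injective, preserves the bilinear pairings (⟨η(γ), η(γ')⟩ = (γ,γ') for all γ, γ' ∈ T(X,α_B)), and its image is exactly T(φ), the orthogonal complement of Pic(φ) in Λ̃. Moreover σ lies in T(X,α_B)⊗ℂ and the ℂ-linear extension of η maps σ to φ; thus η is a Hodge isometry from T(X,α_B) onto T(φ). -/

import Mathlib

open scoped TensorProduct ComplexOrder

set_option synthInstance.maxHeartbeats 1000000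
set_option maxHeartbeats 1000000

noncomputable section

variable (L : Type) [AddCommGroup L]

/-- `L ⊗ ℚ`. -/
abbrev LQ := ℚ ⊗[ℤ] L
/-- `L ⊗ ℂ`. -/
abbrev LC := ℂ ⊗[ℤ] L

/-- The canonical map `L → L⊗ℚ`. -/
def iLQ : L →ₗ[ℤ] LQ L := TensorProduct.mk ℤ ℚ L 1
/-- The canonical map `L → L⊗ℂ`. -/
def iLC : L →ₗ[ℤ] LC L := TensorProduct.mk ℤ ℂ L 1
/-- The canonical map `L⊗ℚ → L⊗ℂ`. -/
def qToC : LQ L →ₗ[ℤ] LC L :=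
  LinearMap.rTensor L ((Algebra.linearMap ℚ ℂ).restrictScalars ℤ)
/-- Complex conjugation on `L⊗ℂ`, fixing the real points. -/
def conjL : LC L →ₗ[ℤ] LC L :=
  LinearMap.rTensor L ((starRingEnd ℂ).toAddMonoidHom.toIntLinearMap)

/-- The ℚ-bilinear extension of the form on `L` to `L⊗ℚ`. -/
def bQ (l : L →ₗ[ℤ] L →ₗ[ℤ] ℤ) : LinearMap.BilinForm ℚ (LQ L) :=
  LinearMap.BilinForm.baseChange ℚ l
/-- The ℂ-bilinear extension of the form on `L` to `L⊗ℂ`. -/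
def bC (l : L →ₗ[ℤ] L →ₗ[ℤ] ℤ) : LinearMap.BilinForm ℂ (LC L) :=
  LinearMap.BilinForm.baseChange ℂ l

/-- The Mukai lattice `Λ̃ = ℤ ⊕ L ⊕ ℤ`. -/
abbrev MukaiLattice := ℤ × L × ℤ

/-- The embedding `Λ̃ → Λ̃⊗ℂ`. -/
def embC (δ : MukaiLattice L) : ℂ × LC L × ℂ := ((δ.1 : ℂ), iLC L δ.2.1, (δ.2.2 : ℂ))

/-- The integral Mukai pairing on `Λ̃`. -/
def mZ (l : L →ₗ[ℤ] L →ₗ[ℤ] ℤ) (x y : MukaiLattice L) : ℤ :=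
  l x.2.1 y.2.1 - x.1 * y.2.2 - y.1 * x.2.2

/-- The Mukai pairing on `Λ̃⊗ℂ`. -/
def mC (l : L →ₗ[ℤ] L →ₗ[ℤ] ℤ) (x y : ℂ × LC L × ℂ) : ℂ :=
  bC L l x.2.1 y.2.1 - x.1 * y.2.2 - y.1 * x.2.2

/-- The period of the B-field transform, `exp(B)σ := (0, σ, (B,σ))`, for rational `B`. -/
def expB (l : L →ₗ[ℤ] L →ₗ[ℤ] ℤ) (B : LQ L) (σ : LC L) : ℂ × LC L × ℂ :=
  ((0 : ℂ), σ, bC L l (qToC L B) σ)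

/-- `Pic(X) := {δ ∈ L : (δ,σ) = 0}`. -/
def PicX (l : L →ₗ[ℤ] L →ₗ[ℤ] ℤ) (σ : LC L) : Set L :=
  {δ : L | bC L l (iLC L δ) σ = 0}

/-- The transcendental lattice `T(X) := {γ ∈ L : (γ,δ) = 0 for all δ ∈ Pic(X)}`. -/
def TX (l : L →ₗ[ℤ] L →ₗ[ℤ] ℤ) (σ : LC L) : Set L :=
  {γ : L | ∀ δ ∈ PicX L l σ, l γ δ = 0}

/-- `T(X,α_B) := {γ ∈ T(X) : (γ,B) ∈ ℤ}`. -/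
def TXB (l : L →ₗ[ℤ] L →ₗ[ℤ] ℤ) (σ : LC L) (B : LQ L) : Set L :=
  {γ : L | γ ∈ TX L l σ ∧ ∃ n : ℤ, bQ L l (iLQ L γ) B = (n : ℚ)}

/-- `Pic(φ) := {δ ∈ Λ̃ : ⟨δ,φ⟩ = 0}`. -/
def PicPhi (l : L →ₗ[ℤ] L →ₗ[ℤ] ℤ) (σ : LC L) (B : LQ L) : Set (MukaiLattice L) :=
  {δ : MukaiLattice L | mC L l (embC L δ) (expB L l B σ) = 0}

/-- `T(φ) := {γ ∈ Λ̃ : ⟨γ,δ⟩ = 0 for all δ ∈ Pic(φ)}`. -/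
def TPhi (l : L →ₗ[ℤ] L →ₗ[ℤ] ℤ) (σ : LC L) (B : LQ L) : Set (MukaiLattice L) :=
  {γ : MukaiLattice L | ∀ δ ∈ PicPhi L l σ B, mZ L l γ δ = 0}

/-!
Pairing with `φ = (0, σ, (B,σ))` shows that `(a, d, b) ∈ Pic(φ)` iff `d - aB ∈ L⊗ℚ` is
orthogonal to `σ`, i.e. iff a nonzero multiple of `d - aB` lies in `Pic(X)`; hence
`η(T(X,α_B)) ⊆ T(φ)`. Conversely, testing `(a, g, b) ∈ T(φ)` against `(0, 0, 1)`, against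
`(0, δ, 0)` for `δ ∈ Pic(X)` and against `(N, NB, 0)` with `NB ∈ L` gives `a = 0`, `g ∈ T(X)`
and `b = (g, B)`.

Since `Pic(X)` is finitely generated, `T(X)` is the kernel of finitely many integral functionals
`(δᵢ, ·)`, all of which vanish on `σ`; as `ℂ` is flat over `ℤ`, the kernel of their
complexification is spanned by `T(X)`, so `σ ∈ T(X)⊗ℂ`. Finally `N • T(X) ⊆ T(X,α_B)`.
-/

theorem Module.Flat.mem_span_mk_ker_of_lTensor_eq_zero {R A M N : Type*} [CommRing R]
    [CommRing A] [Algebra R A] [Module.Flat R A] [AddCommGroup M] [Module R M] [AddCommGroup N]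
    [Module R N] (f : M →ₗ[R] N) {v : A ⊗[R] M} (hv : f.lTensor A v = 0) :
    v ∈ Submodule.span A (TensorProduct.mk R A M 1 '' LinearMap.ker f) := by
  have hv' : v ∈ LinearMap.ker (TensorProduct.AlgebraTensorModule.lTensor A A f) := hv
  rw [Module.Flat.ker_lTensor_eq] at hv'
  obtain ⟨w, rfl⟩ := hv'
  clear hv
  induction w using TensorProduct.induction_on with
  | zero => simp
  | tmul a k =>
    have hk : TensorProduct.mk R A M 1 k ∈ TensorProduct.mk R A M 1 '' LinearMap.ker f :=
      ⟨k, k.2, rfl⟩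
    simpa [TensorProduct.smul_tmul'] using Submodule.smul_mem _ a (Submodule.subset_span hk)
  | add x y hx hy => simpa using Submodule.add_mem _ hx hy

section

variable {L}

lemma exists_zsmul_eq_iLQ (v : LQ L) : ∃ N : ℤ, N ≠ 0 ∧ ∃ x : L, N • v = iLQ L x := by
  obtain ⟨⟨x, N⟩, h⟩ :=
    IsLocalizedModule.surj (nonZeroDivisors ℤ) (TensorProduct.mk ℤ ℚ L 1) v
  exact ⟨N, nonZeroDivisors.coe_ne_zero N, x, h⟩

lemma iLQ_apply (x : L) : iLQ L x = (1 : ℚ) ⊗ₜ x := TensorProduct.mk_apply ..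

lemma iLC_apply (x : L) : iLC L x = (1 : ℂ) ⊗ₜ x := TensorProduct.mk_apply ..

@[simp] lemma qToC_iLQ (x : L) : qToC L (iLQ L x) = iLC L x := by
  rw [iLQ_apply, iLC_apply, ← Rat.cast_one (α := ℂ)]
  rfl

variable (l : L →ₗ[ℤ] L →ₗ[ℤ] ℤ)

@[simp] lemma bQ_iLQ_iLQ (x y : L) : bQ L l (iLQ L x) (iLQ L y) = l x y := by
  simp [bQ, iLQ_apply]

/-- `Pic(X)` as a submodule; its carrier is `PicX L l σ` by definition. -/
def picSubmodule (σ : LC L) : Submodule ℤ L :=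
  LinearMap.ker (((bC L l).flip σ).restrictScalars ℤ ∘ₗ iLC L)

variable {l} {σ : LC L} {B : LQ L}

lemma mk_mem_PicPhi_iff (a b : ℤ) (d : L) :
    (a, d, b) ∈ PicPhi L l σ B ↔ bC L l (iLC L d) σ = a * bC L l (qToC L B) σ := by
  simp [PicPhi, mC, embC, expB, sub_eq_zero]

lemma mZ_zero_left (γ d : L) (n a b : ℤ) : mZ L l (0, γ, n) (a, d, b) = l γ d - a * n := by
  simp [mZ]

lemma bQ_eq_zero_of_mem_TX {γ : L} (hγ : γ ∈ TX L l σ) {w : LQ L}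
    (hw : bC L l (qToC L w) σ = 0) : bQ L l (iLQ L γ) w = 0 := by
  obtain ⟨N, hN, x, hx⟩ := exists_zsmul_eq_iLQ w
  have hxPic : x ∈ PicX L l σ := by
    simp only [PicX, Set.mem_ofPred_eq, ← qToC_iLQ, ← hx, map_zsmul, LinearMap.smul_apply, hw,
      smul_zero]
  have hNw : N • bQ L l (iLQ L γ) w = 0 := by
    rw [← map_zsmul, hx, bQ_iLQ_iLQ, hγ x hxPic, Int.cast_zero]
  exact (smul_eq_zero.mp hNw).resolve_left hN

lemma mem_TPhi_of_mem_TX {γ : L} (hγ : γ ∈ TX L l σ) {n : ℤ}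
    (hn : bQ L l (iLQ L γ) B = n) : (0, γ, n) ∈ TPhi L l σ B := by
  rintro ⟨a, d, b⟩ hδ
  rw [mk_mem_PicPhi_iff] at hδ
  have hperp : bQ L l (iLQ L γ) (iLQ L d - a • B) = 0 := by
    refine bQ_eq_zero_of_mem_TX hγ ?_
    rw [map_sub, map_zsmul, qToC_iLQ, map_sub, LinearMap.sub_apply, map_zsmul,
      LinearMap.smul_apply, hδ, zsmul_eq_mul, sub_self]
  rw [map_sub, map_zsmul, bQ_iLQ_iLQ, hn, zsmul_eq_mul] at hperp
  rw [mZ_zero_left]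
  exact_mod_cast sub_eq_zero.mpr (sub_eq_zero.mp hperp)

lemma exists_eq_of_mem_TPhi {x : MukaiLattice L} (hx : x ∈ TPhi L l σ B) :
    ∃ γ ∈ TXB L l σ B, ∃ n : ℤ, bQ L l (iLQ L γ) B = n ∧ x = (0, γ, n) := by
  obtain ⟨a, g, b⟩ := x
  have ha : a = 0 := by
    have h := hx (0, 0, 1) ((mk_mem_PicPhi_iff ..).mpr (by simp))
    simpa [mZ] using h
  subst ha
  have hg : g ∈ TX L l σ := fun δ hδ => by
    have h := hx (0, δ, 0) ((mk_mem_PicPhi_iff ..).mpr (by rwa [Int.cast_zero, zero_mul]))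
    simpa [mZ] using h
  obtain ⟨N, hN, B₀, hB₀⟩ := exists_zsmul_eq_iLQ B
  have hb : bQ L l (iLQ L g) B = b := by
    have h := hx (N, B₀, 0) ((mk_mem_PicPhi_iff ..).mpr (by
      rw [← qToC_iLQ, ← hB₀, map_zsmul, map_zsmul, LinearMap.smul_apply, zsmul_eq_mul]))
    have hgB : N • bQ L l (iLQ L g) B = N • (b : ℚ) := by
      rw [← map_zsmul, hB₀, bQ_iLQ_iLQ, zsmul_eq_mul]
      simp only [mZ] at h
      exact_mod_cast (by linarith : l g B₀ = N * b)
    exact smul_right_injective ℚ hN hgB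
  exact ⟨g, ⟨hg, b, hb⟩, b, hb, rfl⟩

lemma zsmul_mem_TXB {N : ℤ} {B₀ : L} (hB₀ : N • B = iLQ L B₀) {x : L} (hx : x ∈ TX L l σ) :
    N • x ∈ TXB L l σ B := by
  refine ⟨fun δ hδ => by simp [hx δ hδ], l x B₀, ?_⟩
  rw [map_zsmul, map_zsmul, LinearMap.smul_apply, ← map_zsmul, hB₀, bQ_iLQ_iLQ]

lemma piScalarRight_lTensor_pi_apply {ι : Type*} [Fintype ι] [DecidableEq ι] (δ : ι → L)
    (v : LC L) (i : ι) :
    TensorProduct.piScalarRight ℤ ℂ ℂ ι ((LinearMap.pi fun i => l (δ i)).lTensor ℂ v) i =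
      bC L l (iLC L (δ i)) v := by
  induction v using TensorProduct.induction_on with
  | zero => simp
  | tmul c x => simp [bC, iLC_apply, LinearMap.BilinForm.baseChange_tmul]
  | add u w hu hw => simp only [map_add, Pi.add_apply, hu, hw]

lemma TX_eq_ker_pi (hsymm : ∀ x y : L, l x y = l y x) {ι : Type*} {δ : ι → L}
    (hδ : Submodule.span ℤ (Set.range δ) = picSubmodule l σ) :
    TX L l σ = LinearMap.ker (LinearMap.pi fun i => l (δ i)) := by
  ext γ
  have h : γ ∈ TX L l σ ↔ picSubmodule l σ ≤ LinearMap.ker (l γ) :=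
    ⟨fun h _ hx => h _ hx, fun h _ hx => h hx⟩
  rw [h, ← hδ, Submodule.span_le]
  simp [Set.range_subset_iff, funext_iff, hsymm γ]

lemma mem_span_TX [Module.Finite ℤ L] (hsymm : ∀ x y : L, l x y = l y x) :
    σ ∈ Submodule.span ℂ (iLC L '' TX L l σ) := by
  obtain ⟨k, δ, hδ⟩ :=
    Submodule.fg_iff_exists_fin_generating_family.mp (IsNoetherian.noetherian (picSubmodule l σ))
  have hσ : (LinearMap.pi fun i => l (δ i)).lTensor ℂ σ = 0 := by
    refine (TensorProduct.piScalarRight ℤ ℂ ℂ (Fin k)).injective ?_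
    ext i
    rw [piScalarRight_lTensor_pi_apply, map_zero, Pi.zero_apply]
    exact hδ.le (Submodule.subset_span ⟨i, rfl⟩)
  rw [TX_eq_ker_pi hsymm hδ]
  exact Module.Flat.mem_span_mk_ker_of_lTensor_eq_zero _ hσ

lemma span_TX_le_span_TXB :
    Submodule.span ℂ (iLC L '' TX L l σ) ≤ Submodule.span ℂ (iLC L '' TXB L l σ B) := by
  obtain ⟨N, hN, B₀, hB₀⟩ := exists_zsmul_eq_iLQ B
  rw [Submodule.span_le]
  rintro _ ⟨x, hx, rfl⟩
  have hx' : iLC L x = (N : ℂ)⁻¹ • iLC L (N • x) := by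
    rw [map_zsmul, ← Int.cast_smul_eq_zsmul ℂ, inv_smul_smul₀ (by exact_mod_cast hN)]
  rw [SetLike.mem_coe, hx']
  exact Submodule.smul_mem _ _ (Submodule.subset_span ⟨_, zsmul_mem_TXB hB₀ hx, rfl⟩)

end

theorem eta_hodge_isometry_general
    (L : Type) [AddCommGroup L] [Module.Finite ℤ L]
    (l : L →ₗ[ℤ] L →ₗ[ℤ] ℤ) (hsymm : ∀ x y : L, l x y = l y x)
    (σ : LC L)
    (B : LQ L) :
    (∀ γ ∈ TXB L l σ B, ∀ n : ℤ, bQ L l (iLQ L γ) B = (n : ℚ) →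
      ((0 : ℤ), γ, n) ∈ TPhi L l σ B) ∧
    (∀ γ ∈ TXB L l σ B, ∀ γ' ∈ TXB L l σ B, ∀ n n' : ℤ,
      bQ L l (iLQ L γ) B = (n : ℚ) → bQ L l (iLQ L γ') B = (n' : ℚ) →
      (((0 : ℤ), γ, n) : MukaiLattice L) = ((0 : ℤ), γ', n') → γ = γ') ∧
    (∀ γ ∈ TXB L l σ B, ∀ γ' ∈ TXB L l σ B, ∀ n n' : ℤ,
      bQ L l (iLQ L γ) B = (n : ℚ) → bQ L l (iLQ L γ') B = (n' : ℚ) →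
      mZ L l ((0 : ℤ), γ, n) ((0 : ℤ), γ', n') = l γ γ') ∧
    (∀ x ∈ TPhi L l σ B, ∃ γ ∈ TXB L l σ B, ∃ n : ℤ,
      bQ L l (iLQ L γ) B = (n : ℚ) ∧ x = ((0 : ℤ), γ, n)) ∧
    (σ ∈ Submodule.span ℂ (iLC L '' TXB L l σ B)) ∧
    (((0 : ℂ), σ, bC L l (qToC L B) σ) = expB L l B σ) :=
  ⟨fun _ hγ _ hn => mem_TPhi_of_mem_TX hγ.1 hn,
    fun _ _ _ _ _ _ _ _ h => congrArg (·.2.1) h,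
    fun _ _ _ _ _ _ _ _ => by simp [mZ_zero_left],
    fun _ hx => exists_eq_of_mem_TPhi hx,
    span_TX_le_span_TXB (mem_span_TX hsymm),
    rfl⟩

/-- The map `η : γ ↦ (0, γ, (γ,B))` sends `T(X,α_B)` into `Λ̃`, is
injective, preserves the pairings, has image exactly `T(φ)`; and `σ ∈ T(X,α_B)⊗ℂ` with the
ℂ-linear extension of `η` mapping `σ` to `φ`: `η` is a Hodge isometry
`T(X,α_B) ≅ T(φ)`. -/
theorem eta_hodge_isometry
    (L : Type) [AddCommGroup L] [Module.Free ℤ L] [Module.Finite ℤ L]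
    (l : L →ₗ[ℤ] L →ₗ[ℤ] ℤ) (hsymm : ∀ x y : L, l x y = l y x)
    (σ : LC L) (hσ0 : bC L l σ σ = 0) (hσpos : 0 < bC L l σ (conjL L σ))
    (B : LQ L) :
    (∀ γ ∈ TXB L l σ B, ∀ n : ℤ, bQ L l (iLQ L γ) B = (n : ℚ) →
      ((0 : ℤ), γ, n) ∈ TPhi L l σ B) ∧
    (∀ γ ∈ TXB L l σ B, ∀ γ' ∈ TXB L l σ B, ∀ n n' : ℤ,
      bQ L l (iLQ L γ) B = (n : ℚ) → bQ L l (iLQ L γ') B = (n' : ℚ) →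
      (((0 : ℤ), γ, n) : MukaiLattice L) = ((0 : ℤ), γ', n') → γ = γ') ∧
    (∀ γ ∈ TXB L l σ B, ∀ γ' ∈ TXB L l σ B, ∀ n n' : ℤ,
      bQ L l (iLQ L γ) B = (n : ℚ) → bQ L l (iLQ L γ') B = (n' : ℚ) →
      mZ L l ((0 : ℤ), γ, n) ((0 : ℤ), γ', n') = l γ γ') ∧
    (∀ x ∈ TPhi L l σ B, ∃ γ ∈ TXB L l σ B, ∃ n : ℤ,
      bQ L l (iLQ L γ) B = (n : ℚ) ∧ x = ((0 : ℤ), γ, n)) ∧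
    (σ ∈ Submodule.span ℂ (iLC L '' TXB L l σ B)) ∧
    (((0 : ℂ), σ, bC L l (qToC L B) σ) = expB L l B σ) :=
  eta_hodge_isometry_general L l hsymm σ B
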